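/- Lagrange inversion in Bell polynomial form: let f(t) = ∑_{n≥1} f_n t^n be a formal power series over a ℚ-algebra with f_1 invertible. Then the coefficients of the compositional inverse f^{-1} satisfy (f^{-1})_1 = 1/f_1 and, for n ≥ 2 and f_1 = 1, (f^{-1})_n = (1/n!) ∑_{k=1}^{n-1} B_{n-1+k, k}(0, -2!·f_2, -3!·f_3, ...). -/

import Mathlib

/-!
Write `f = X * (1 - ψ)`. Differentiating `g ∘ f = X` gives `(g' ∘ f) * f' = 1`. Multiply by
`(X / f) ^ (n + 1)` and take the coefficient of `X ^ n`: the degree-`j` term of `g'` contributes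
`g'_j` times the residue of `f' / f ^ (n + 1 - j)`, which is `1` for `j = n` and `0` for `j < n`,
because `f' / f ^ e` is a derivative when `e ≥ 2`. This is Lagrange's formula
`(n + 1) g_{n+1} = [X ^ n] (1 - ψ) ^ (-(n + 1)) = ∑ₖ C(n + k, n) [X ^ n] ψ ^ k`.
On the Bell side, `k! B_{n,k}(j! h_j) = n! [X ^ n] h ^ k` (the exponential formula, proved by
differentiating `h ^ (k + 1)`), and for `h = X - f = X * ψ` the right-hand side is
`n! [X ^ (n - k)] ψ ^ k`.
-/

open Finset PowerSeries

/-- Partial Bell polynomials `B n k`, defined by the standard recurrence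
`B_{n,k} = ∑_{i=1}^{n-k+1} C(n-1, i-1) * x_i * B_{n-i, k-1}`, equivalently by the
exponential generating function `∑ B_{n,k} u^k t^n/n! = exp (u * ∑_{j ≥ 1} x_j t^j/j!)`. -/
def bellPoly {R : Type*} [CommRing R] (x : ℕ → R) : ℕ → ℕ → R
  | 0, 0 => 1
  | 0, _+1 => 0
  | _+1, 0 => 0
  | n+1, k+1 => ∑ i ∈ Finset.range (n+1), (n.choose i : R) * x (i+1) * bellPoly x (n - i) k

/-- Composition `f ∘ g` of formal power series; this is the correct notion of
composition when `g` has zero constant coefficient (then `coeff n (g ^ k) = 0` for `k > n`). -/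
noncomputable def compPS {R : Type*} [CommRing R] (f g : PowerSeries R) : PowerSeries R :=
  PowerSeries.mk fun n =>
    ∑ k ∈ Finset.range (n + 1), (PowerSeries.coeff k f) * (PowerSeries.coeff n (g ^ k))

namespace PowerSeries

variable {R : Type*} [CommRing R]

theorem coeff_pow_mul_eq_zero_of_lt {a : R⟦X⟧} (ha : constantCoeff a = 0) (B : R⟦X⟧)
    {N k : ℕ} (h : N < k) : coeff N (a ^ k * B) = 0 :=
  X_pow_dvd_iff.mp ((pow_dvd_pow_of_dvd (X_dvd_iff.mpr ha) k).mul_right B) N h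

theorem coeff_mul_subst {a : R⟦X⟧} (ha : constantCoeff a = 0) (φ B : R⟦X⟧) (N : ℕ) :
    coeff N (B * φ.subst a) = ∑ j ∈ range (N + 1), coeff j φ * coeff N (B * a ^ j) := by
  have hsub := HasSubst.of_constantCoeff_zero' ha
  have hsplit : φ.subst a = a ^ (N + 1) * (mk fun i ↦ coeff (i + (N + 1)) φ).subst a
      + ∑ j ∈ range (N + 1), C (coeff j φ) * a ^ j := by
    conv_lhs => rw [eq_X_pow_mul_shift_add_trunc (N + 1) φ]
    rw [subst_add hsub, subst_mul hsub, subst_pow hsub, subst_X hsub, subst_coe hsub,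
      Polynomial.aeval_def, eval₂_trunc_eq_sum_range]
    rfl
  rw [hsplit, mul_add, map_add, mul_left_comm, coeff_pow_mul_eq_zero_of_lt ha _ (by omega),
    zero_add, mul_sum, map_sum]
  refine sum_congr rfl fun j _ => ?_
  rw [mul_left_comm, coeff_C_mul]

theorem coeff_pow_eq_sum_choose_mul_coeff_pow {ψ v : R⟦X⟧} (hψ : constantCoeff ψ = 0)
    (hv : (1 - ψ) * v = 1) (d N : ℕ) :
    coeff N (v ^ (d + 1)) = ∑ k ∈ range (N + 1), ((d + k).choose d : R) * coeff N (ψ ^ k) := by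
  have hsub := HasSubst.of_constantCoeff_zero' hψ
  set S : R⟦X⟧ := (mk fun n ↦ ((d + n).choose d : R)).subst ψ
  have hS : S * (1 - ψ) ^ (d + 1) = 1 := by
    have := congrArg (subst ψ) (mk_add_choose_mul_one_sub_pow_eq_one (S := R) (d := d))
    rwa [subst_mul hsub, subst_pow hsub, subst_sub hsub, subst_X hsub, ← map_one C, subst_C,
      map_one] at this
  have hvS : v ^ (d + 1) = S := by
    calc v ^ (d + 1) = v ^ (d + 1) * (S * (1 - ψ) ^ (d + 1)) := by rw [hS, mul_one]
      _ = S * ((1 - ψ) * v) ^ (d + 1) := by rw [mul_pow]; ring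
      _ = S := by rw [hv, one_pow, mul_one]
  rw [hvS, ← one_mul S, coeff_mul_subst hψ]
  simp only [coeff_mk, one_mul]

theorem derivative_X_mul (u : R⟦X⟧) : d⁄dX R (X * u) = u + X * d⁄dX R u := by
  rw [Derivation.leibniz, derivative_X, smul_eq_mul, smul_eq_mul, mul_one, add_comm]

/-- For `f = X * u` and `v = u⁻¹` this is the vanishing of the residue of `f' / f ^ (q + 2)`,
which is `-(f ^ (-(q + 1)))' / (q + 1)`. -/
theorem coeff_succ_pow_mul_derivative_X_mul_eq_zero [IsAddTorsionFree R] {u v : R⟦X⟧}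
    (huv : u * v = 1) (q : ℕ) : coeff (q + 1) (v ^ (q + 2) * d⁄dX R (X * u)) = 0 := by
  have hdv : d⁄dX R v = -(v ^ 2 * d⁄dX R u) := by
    have h := congrArg (d⁄dX R) huv
    rw [Derivation.leibniz, Derivation.map_one_eq_zero, smul_eq_mul, smul_eq_mul] at h
    linear_combination v * h - d⁄dX R v * huv
  have hdw : d⁄dX R (v ^ (q + 1)) = -(C (q + 1 : R) * (v ^ (q + 2) * d⁄dX R u)) := by
    rw [derivative_pow, hdv, map_add, map_one, map_natCast]
    push_cast
    ring
  have hsplit : C (q + 1 : R) * (v ^ (q + 2) * d⁄dX R (X * u))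
      = C (q + 1 : R) * v ^ (q + 1) - X * d⁄dX R (v ^ (q + 1)) := by
    rw [hdw, derivative_X_mul]
    linear_combination C (q + 1 : R) * v ^ (q + 1) * huv
  have hzero : (q + 1) • coeff (q + 1) (v ^ (q + 2) * d⁄dX R (X * u)) = 0 := by
    have h := congrArg (coeff (q + 1)) hsplit
    rw [coeff_C_mul, map_sub, coeff_C_mul, coeff_succ_X_mul, coeff_derivative] at h
    rw [nsmul_eq_mul]
    push_cast
    linear_combination h
  exact (nsmul_eq_zero_iff.mp hzero).resolve_right (Nat.succ_ne_zero q)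

theorem coeff_pow_mul_derivative_X_mul_pow {u v : R⟦X⟧} (huv : u * v = 1) (j q : ℕ) :
    coeff (q + j) (v ^ (q + j + 1) * d⁄dX R (X * u) * (X * u) ^ j)
      = coeff q (v ^ (q + 1) * d⁄dX R (X * u)) := by
  have hvu : v ^ (q + j + 1) * u ^ j = v ^ (q + 1) :=
    calc v ^ (q + j + 1) * u ^ j = v ^ (q + 1) * (u * v) ^ j := by ring
      _ = v ^ (q + 1) := by rw [huv, one_pow, mul_one]
  rw [← coeff_X_pow_mul _ j q, mul_pow, ← hvu]
  ring_nf

theorem succ_mul_coeff_succ_eq_coeff_pow [IsAddTorsionFree R] {f g u v : R⟦X⟧}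
    (hfu : f = X * u) (huv : u * v = 1) (hgf : g.subst f = X) (n : ℕ) :
    (n + 1 : R) * coeff (n + 1) g = coeff n (v ^ (n + 1)) := by
  have hf0 : constantCoeff f = 0 := by simp [hfu]
  have hchain : (d⁄dX R g).subst f * d⁄dX R f = 1 := by
    rw [← derivative_subst (HasSubst.of_constantCoeff_zero' hf0), hgf, derivative_X]
  have hterm : ∀ j ∈ range (n + 1),
      coeff j (d⁄dX R g) * coeff n (v ^ (n + 1) * d⁄dX R f * f ^ j)
        = if j = n then (n + 1 : R) * coeff (n + 1) g else 0 := by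
    intro j hj
    obtain ⟨q, rfl⟩ : ∃ q, n = q + j := ⟨n - j, by simp at hj; omega⟩
    rw [hfu, coeff_pow_mul_derivative_X_mul_pow huv, coeff_derivative]
    rcases q with _ | q
    · have hconst : coeff 0 (v ^ (0 + 1) * d⁄dX R (X * u)) = 1 := by
        rw [derivative_X_mul, zero_add, pow_one, mul_add, map_add, mul_comm v u, huv]
        simp
      rw [hconst, if_pos (zero_add j).symm, zero_add]
      ring
    · rw [if_neg (by omega), show q + 1 + 1 = q + 2 from rfl,
        coeff_succ_pow_mul_derivative_X_mul_eq_zero huv, mul_zero]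
  calc (n + 1 : R) * coeff (n + 1) g
      = ∑ j ∈ range (n + 1),
          coeff j (d⁄dX R g) * coeff n (v ^ (n + 1) * d⁄dX R f * f ^ j) := by
        rw [sum_congr rfl hterm, sum_ite_eq', if_pos (self_mem_range_succ n)]
    _ = coeff n (v ^ (n + 1) * d⁄dX R f * (d⁄dX R g).subst f) :=
        (coeff_mul_subst hf0 _ _ n).symm
    _ = coeff n (v ^ (n + 1)) := by rw [mul_assoc, mul_comm (d⁄dX R f), hchain, mul_one]

theorem succ_mul_coeff_succ_eq_sum_choose [IsAddTorsionFree R] {f g ψ : R⟦X⟧}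
    (hfψ : f = X * (1 - ψ)) (hψ : constantCoeff ψ = 0) (hgf : g.subst f = X) (n : ℕ) :
    (n + 1 : R) * coeff (n + 1) g
      = ∑ k ∈ range (n + 1), ((n + k).choose n : R) * coeff n (ψ ^ k) := by
  have hv := mul_invOfUnit (1 - ψ) 1 (by simp [hψ])
  rw [succ_mul_coeff_succ_eq_coeff_pow hfψ hv hgf, coeff_pow_eq_sum_choose_mul_coeff_pow hψ hv]

end PowerSeries

theorem compPS_eq_subst {R : Type*} [CommRing R] (f : PowerSeries R) {g : PowerSeries R}
    (hg : constantCoeff g = 0) : compPS f g = f.subst g := by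
  ext n
  rw [compPS, coeff_mk, ← one_mul (f.subst g), coeff_mul_subst hg]
  simp only [one_mul]

open Nat in
theorem factorial_mul_bellPoly {R : Type*} [CommRing R] {h : R⟦X⟧} (h0 : constantCoeff h = 0)
    (n k : ℕ) :
    (k ! : R) * bellPoly (fun j => (j ! : R) * coeff j h) n k = n ! * coeff n (h ^ k) := by
  induction k generalizing n with
  | zero => cases n <;> simp [bellPoly, coeff_one]
  | succ k ih =>
    cases n with
    | zero => simp [bellPoly, h0]
    | succ n =>
      have hterm : ∀ i ∈ range (n + 1), (n.choose i : R) * ((i + 1) ! * coeff (i + 1) h)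
          * (k ! * bellPoly (fun j => (j ! : R) * coeff j h) (n - i) k)
          = n ! * (coeff i (d⁄dX R h) * coeff (n - i) (h ^ k)) := by
        intro i hi
        have hfact :=
          Nat.choose_mul_factorial_mul_factorial (Nat.le_of_lt_succ (mem_range.mp hi))
        rw [ih, coeff_derivative, Nat.factorial_succ, ← hfact]
        push_cast
        ring
      have hderiv : (k + 1 : R) * coeff n (d⁄dX R h * h ^ k)
          = (n + 1) * coeff (n + 1) (h ^ (k + 1)) := by
        have := coeff_derivative (h ^ (k + 1)) n
        rw [derivative_pow, Nat.add_sub_cancel, ← map_natCast C, mul_assoc, coeff_C_mul,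
          mul_comm (h ^ k)] at this
        push_cast at this
        linear_combination this
      calc ((k + 1) ! : R) * bellPoly (fun j => (j ! : R) * coeff j h) (n + 1) (k + 1)
          = (k + 1 : R) * ∑ i ∈ range (n + 1), (n.choose i : R) * ((i + 1) ! * coeff (i + 1) h)
              * (k ! * bellPoly (fun j => (j ! : R) * coeff j h) (n - i) k) := by
            rw [bellPoly, Nat.factorial_succ, mul_sum, mul_sum]
            push_cast
            refine sum_congr rfl fun i _ => by ring
        _ = (k + 1 : R) * (n ! * coeff n (d⁄dX R h * h ^ k)) := by
            rw [sum_congr rfl hterm, ← mul_sum, coeff_mul,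
              Nat.sum_antidiagonal_eq_sum_range_succ_mk]
        _ = ((n + 1) ! : R) * coeff (n + 1) (h ^ (k + 1)) := by
            rw [mul_left_comm, hderiv, Nat.factorial_succ]
            push_cast
            ring

open Nat in
theorem bellPoly_factorial_mul_coeff_X_mul {R : Type*} [CommRing R] [IsAddTorsionFree R]
    (ψ : R⟦X⟧) (m k : ℕ) :
    bellPoly (fun j => (j ! : R) * coeff j (X * ψ)) (m + k) k
      = (m ! * (m + k).choose m : ℕ) * coeff m (ψ ^ k) := by
  apply nsmul_right_injective (Nat.factorial_ne_zero k)
  simp only [nsmul_eq_mul]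
  rw [factorial_mul_bellPoly (by simp), mul_pow, coeff_X_pow_mul,
    ← Nat.add_choose_mul_factorial_mul_factorial m k, Nat.choose_symm_add]
  push_cast
  ring

open Nat in
theorem sum_Icc_bellPoly_factorial_mul_coeff_X_mul {R : Type*} [CommRing R] [IsAddTorsionFree R]
    (ψ : R⟦X⟧) {m : ℕ} (hm : m ≠ 0) :
    ∑ k ∈ Icc 1 m, bellPoly (fun j => (j ! : R) * coeff j (X * ψ)) (m + k) k
      = m ! * ∑ k ∈ range (m + 1), ((m + k).choose m : R) * coeff m (ψ ^ k) := by
  rw [mul_sum, range_eq_Ico, sum_eq_sum_Ico_succ_bot m.succ_pos, pow_zero, coeff_one, if_neg hm,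
    mul_zero, mul_zero, zero_add, zero_add, ← Nat.add_one, Ico_add_one_right_eq_Icc]
  refine sum_congr rfl fun k _ => ?_
  rw [bellPoly_factorial_mul_coeff_X_mul]
  push_cast
  ring

open Nat in
theorem lagrange_inversion_bell_general {R : Type*} [CommRing R] [Algebra ℚ R]
    (f g : PowerSeries R) (hf0 : constantCoeff f = 0) (hf1 : coeff 1 f = 1)
    (hinv' : compPS g f = X) :
    coeff 1 g = 1 ∧
    ∀ n, 2 ≤ n → coeff n g = (n.factorial : ℚ)⁻¹ •
      ∑ k ∈ Finset.Icc 1 (n - 1),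
        bellPoly (fun j => if j = 1 then 0 else -((j.factorial : R) * coeff j f))
          (n - 1 + k) k := by
  have := IsAddTorsionFree.of_module_rat R
  obtain ⟨ψ, hψ⟩ : X ∣ X - f := X_dvd_iff.mpr (by simp [hf0])
  have hψ0 : constantCoeff ψ = 0 := by simpa [hf1] using (congrArg (coeff 1) hψ).symm
  have hlag := succ_mul_coeff_succ_eq_sum_choose (by linear_combination -hψ) hψ0
    (compPS_eq_subst g hf0 ▸ hinv')
  refine ⟨by simpa using hlag 0, fun n hn => ?_⟩
  obtain ⟨m, rfl⟩ : ∃ m, n = m + 1 := ⟨n - 1, by omega⟩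
  have hx : (fun j => if j = 1 then 0 else -((j ! : R) * coeff j f))
      = fun j => (j ! : R) * coeff j (X * ψ) := by
    funext j
    rw [← hψ]
    split_ifs with hj <;> simp [coeff_X, hj, hf1]
  have hfact : (m ! : R) * (m + 1) = ((m + 1) ! : ℕ) := by
    push_cast [factorial_succ]
    ring
  rw [Nat.add_sub_cancel, hx, sum_Icc_bellPoly_factorial_mul_coeff_X_mul ψ (by omega), ← hlag m,
    ← mul_assoc, hfact, ← nsmul_eq_mul, ← Nat.cast_smul_eq_nsmul ℚ,
    inv_smul_smul₀ (by positivity)]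

/-- Lagrange inversion in Bell polynomial form, for a series tangent to
identity (`f₁ = 1`): the compositional inverse `g = f⁻¹` satisfies `g₁ = 1 = 1/f₁`
and, for `n ≥ 2`, `gₙ = (1/n!) ∑_(k=1)^(n-1) B_(n-1+k),k (0, -2!·f₂, -3!·f₃, …)`. -/
theorem lagrange_inversion_bell {R : Type*} [CommRing R] [Algebra ℚ R]
    (f g : PowerSeries R) (hf0 : constantCoeff f = 0) (hf1 : coeff 1 f = 1)
    (hg0 : constantCoeff g = 0)
    (hinv : compPS f g = X) (hinv' : compPS g f = X) :
    coeff 1 g = 1 ∧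
    ∀ n, 2 ≤ n → coeff n g = (n.factorial : ℚ)⁻¹ •
      ∑ k ∈ Finset.Icc 1 (n - 1),
        bellPoly (fun j => if j = 1 then 0 else -((j.factorial : R) * coeff j f))
          (n - 1 + k) k :=
  lagrange_inversion_bell_general f g hf0 hf1 hinv'
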